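/- arXiv:2509.09312 — 6 statements merged into one kernel-verified Lean document; each statement's English description precedes it below -/
import Mathlib

section
/- Let G = (C, E) be a complete tournament with |C| = m candidates and let w ∈ TC(G) be a top-cycle winner of G. Then every minimal support X for w ∈ TC(G) has exactly m − 1 edges. -/
/-- `E` is the edge set of a complete (unweighted) tournament on `C`:
asymmetric and total on distinct candidates. -/
def IsCompleteT {C : Type*} (E : Finset (C × C)) : Prop :=
  (∀ x y : C, (x, y) ∈ E → (y, x) ∉ E) ∧
  (∀ x y : C, x ≠ y → (x, y) ∈ E ∨ (y, x) ∈ E)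

/-- Reachability along directed edges of `E`. -/
def Reach {C : Type*} (E : Finset (C × C)) (a b : C) : Prop :=
  Relation.ReflTransGen (fun x y => (x, y) ∈ E) a b

/-- Membership in the top cycle: `c` reaches every other candidate via a directed path. -/
def InTC {C : Type*} (E : Finset (C × C)) (c : C) : Prop :=
  ∀ c' : C, Reach E c c'

/-- `w` is a necessary winner of TC in the partial tournament `X`. -/
def NWTC {C : Type*} (X : Finset (C × C)) (w : C) : Prop :=
  ∀ E' : Finset (C × C), X ⊆ E' → IsCompleteT E' → InTC E' w

/-- `X` is a minimal support for `w ∈ TC(G)`. -/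
def MSTC {C : Type*} (G X : Finset (C × C)) (w : C) : Prop :=
  X ⊆ G ∧ NWTC X w ∧ ∀ Y : Finset (C × C), Y ⊂ X → ¬ NWTC Y w

/-!
`w` is a necessary top-cycle winner of a partial tournament `X ⊆ G` exactly when `w` reaches
every candidate along `X`-edges: otherwise, orienting every edge of `G` between the set `R`
reached by `w` and its complement towards `R` (the `X`-edges already point that way) gives a
completion in which nothing leaves `R`. So a minimal support is a minimal edge set from which
`w` reaches everyone. Growing a tree from `w` one `X`-edge at a time yields such a set with at
most `m - 1` edges, which by minimality is `X` itself; conversely each candidate other than `w`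
needs an incoming edge, so `X` has at least `m - 1` edges.
-/

open Finset

section Support

variable {C : Type*}

theorem Reach.mono {E F : Finset (C × C)} (h : E ⊆ F) {a b : C} (hab : Reach E a b) :
    Reach F a b :=
  Relation.ReflTransGen.mono (fun _ _ e => h e) a b hab

theorem Reach.mem_of_closed {E : Finset (C × C)} {S : Set C}
    (hS : ∀ x y, (x, y) ∈ E → x ∈ S → y ∈ S) {a b : C} (hab : Reach E a b)
    (ha : a ∈ S) : b ∈ S := by
  induction hab with
  | refl => exact ha
  | tail _ e ih => exact hS _ _ e ih

theorem Reach.exists_edge_mem_notMem {E : Finset (C × C)} {S : Set C} {a b : C}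
    (hab : Reach E a b) (ha : a ∈ S) (hb : b ∉ S) :
    ∃ x y, (x, y) ∈ E ∧ x ∈ S ∧ y ∉ S := by
  by_contra! h
  exact hb (hab.mem_of_closed h ha)

theorem nwtc_of_forall_reach {X : Finset (C × C)} {w : C} (hreach : ∀ c, Reach X w c) :
    NWTC X w :=
  fun _ hXE _ c => (hreach c).mono hXE

section Reorient

variable [Fintype C]

open Classical in
noncomputable def reorient (G : Finset (C × C)) (S : Set C) : Finset (C × C) :=
  univ.filter fun p => ((p.1 ∈ S ↔ p.2 ∈ S) ∧ p ∈ G) ∨ (p.1 ∉ S ∧ p.2 ∈ S)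

theorem mem_reorient {G : Finset (C × C)} {S : Set C} {x y : C} :
    (x, y) ∈ reorient G S ↔
      ((x ∈ S ↔ y ∈ S) ∧ (x, y) ∈ G) ∨ (x ∉ S ∧ y ∈ S) := by
  simp [reorient]

theorem isCompleteT_reorient {G : Finset (C × C)} (hG : IsCompleteT G) (S : Set C) :
    IsCompleteT (reorient G S) := by
  refine ⟨fun x y => ?_, fun x y hxy => ?_⟩
  · have := hG.1 x y
    simp only [mem_reorient]
    tauto
  · have := hG.2 x y hxy
    simp only [mem_reorient]
    tauto

theorem subset_reorient {G X : Finset (C × C)} (hXG : X ⊆ G) {S : Set C}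
    (hS : ∀ x y, (x, y) ∈ X → x ∈ S → y ∈ S) : X ⊆ reorient G S := by
  rintro ⟨x, y⟩ hxy
  rw [mem_reorient]
  by_cases hx : x ∈ S
  · exact Or.inl ⟨iff_of_true hx (hS x y hxy hx), hXG hxy⟩
  · by_cases hy : y ∈ S
    · exact Or.inr ⟨hx, hy⟩
    · exact Or.inl ⟨iff_of_false hx hy, hXG hxy⟩

theorem reorient_closed (G : Finset (C × C)) (S : Set C) :
    ∀ x y, (x, y) ∈ reorient G S → x ∈ S → y ∈ S := by
  intro x y hxy hx
  rw [mem_reorient] at hxy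
  tauto

theorem forall_reach_of_nwtc {G X : Finset (C × C)} (hG : IsCompleteT G) (hXG : X ⊆ G)
    {w : C} (hN : NWTC X w) (c : C) : Reach X w c := by
  let R : Set C := {c | Reach X w c}
  have hR : ∀ x y, (x, y) ∈ X → x ∈ R → y ∈ R := fun _ _ e hx => hx.tail e
  have hwc : Reach (reorient G R) w c :=
    hN _ (subset_reorient hXG hR) (isCompleteT_reorient hG R) c
  exact hwc.mem_of_closed (reorient_closed G R) Relation.ReflTransGen.refl

end Reorient

theorem card_sub_one_le_card_of_forall_reach [Fintype C] {X : Finset (C × C)} {w : C}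
    (hreach : ∀ c, Reach X w c) : Fintype.card C - 1 ≤ X.card := by
  classical
  have hcover : univ.erase w ⊆ X.image Prod.snd := by
    intro c hc
    rcases (hreach c).cases_tail with rfl | ⟨a, -, hac⟩
    · exact absurd rfl (ne_of_mem_erase hc)
    · exact mem_image.mpr ⟨(a, c), hac, rfl⟩
  calc Fintype.card C - 1 = (univ.erase w).card := by
        rw [card_erase_of_mem (mem_univ w), card_univ]
    _ ≤ (X.image Prod.snd).card := card_le_card hcover
    _ ≤ X.card := card_image_le

theorem exists_subset_forall_reach_card_le [Fintype C] {X : Finset (C × C)} {w : C}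
    (hreach : ∀ c, Reach X w c) :
    ∃ T ⊆ X, (∀ c, Reach T w c) ∧ T.card ≤ Fintype.card C - 1 := by
  classical
  have grow : ∀ n < Fintype.card C, ∃ S : Finset C, ∃ T ⊆ X,
      w ∈ S ∧ S.card = n + 1 ∧ T.card ≤ n ∧ ∀ c ∈ S, Reach T w c := by
    intro n hn
    induction n with
    | zero => exact ⟨{w}, ∅, empty_subset X, mem_singleton_self w, rfl, le_rfl,
        fun c hc => mem_singleton.mp hc ▸ Relation.ReflTransGen.refl⟩
    | succ n ih =>
      obtain ⟨S, T, hTX, hwS, hS, hT, hST⟩ := ih (by omega)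
      obtain ⟨c, -, hcS⟩ := exists_mem_notMem_of_card_lt_card
        (show S.card < (univ : Finset C).card by rw [card_univ]; omega)
      obtain ⟨a, b, hab, haS, hbS⟩ := (hreach c).exists_edge_mem_notMem (S := ↑S) hwS hcS
      have hTT' : T ⊆ insert (a, b) T := subset_insert _ _
      refine ⟨insert b S, insert (a, b) T, insert_subset hab hTX, mem_insert_of_mem hwS,
        by rw [card_insert_of_notMem hbS, hS], (card_insert_le _ _).trans (by omega), ?_⟩
      intro d hd
      rcases mem_insert.mp hd with rfl | hdS
      · exact ((hST a haS).mono hTT').tail (mem_insert_self _ _)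
      · exact (hST d hdS).mono hTT'
  have hpos : 0 < Fintype.card C := Fintype.card_pos_iff.mpr ⟨w⟩
  obtain ⟨S, T, hTX, -, hS, hT, hST⟩ := grow (Fintype.card C - 1) (by omega)
  have hSuniv : S = univ := eq_univ_of_card S (by omega)
  exact ⟨T, hTX, fun c => hST c (hSuniv ▸ mem_univ c), hT⟩

end Support

theorem stmt1_general {C : Type*} [Fintype C]
    (m : ℕ) (hm : Fintype.card C = m)
    (G : Finset (C × C)) (hG : IsCompleteT G) (w : C)
    (X : Finset (C × C)) (hX : MSTC G X w) :
    X.card = m - 1 := by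
  obtain ⟨hXG, hN, hmin⟩ := hX
  have hreach := forall_reach_of_nwtc hG hXG hN
  obtain ⟨T, hTX, hT, hTcard⟩ := exists_subset_forall_reach_card_le hreach
  have hTeq : T = X := by
    by_contra hne
    exact hmin T (ssubset_of_subset_of_ne hTX hne) (nwtc_of_forall_reach hT)
  have hXcard := card_sub_one_le_card_of_forall_reach hreach
  subst hTeq hm
  omega

/-- Every minimal support for a top-cycle winner of a complete tournament on `m`
candidates has exactly `m - 1` edges. -/
theorem stmt1 {C : Type*} [Fintype C] [DecidableEq C] [Nonempty C]
    (m : ℕ) (hm : Fintype.card C = m)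
    (G : Finset (C × C)) (hG : IsCompleteT G) (w : C) (hw : InTC G w)
    (X : Finset (C × C)) (hX : MSTC G X w) :
    X.card = m - 1 :=
  stmt1_general m hm G hG w X hX
end

section
/- Let G = (C, μ) be a complete n-weighted tournament with |C| = m candidates, let w ∈ MM(G) be a maximin winner of G with maximin score σ_w, and set t = min(σ_w, ⌊n/2⌋). Then every smallest minimal support X for w ∈ MM(G) satisfies |X| = n(m − 1) − t · |{c ∈ C : μ(w, c) ≥ n − t}|. -/
/-- `μ` is a partial `n`-weighted tournament on `C`. -/
def IsPartialW {C : Type*} (n : ℕ) (μ : C → C → ℕ) : Prop :=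
  (∀ x, μ x x = 0) ∧ ∀ x y : C, x ≠ y → μ x y + μ y x ≤ n

/-- `μ` is a complete `n`-weighted tournament on `C`. -/
def IsCompleteW {C : Type*} (n : ℕ) (μ : C → C → ℕ) : Prop :=
  (∀ x, μ x x = 0) ∧ ∀ x y : C, x ≠ y → μ x y + μ y x = n

/-- `μ'` extends `μ` (pointwise larger weights), i.e. `μ ⊆ μ'`. -/
def ExtW {C : Type*} (μ μ' : C → C → ℕ) : Prop :=
  ∀ x y : C, μ x y ≤ μ' x y

/-- The size of a partial weighted tournament: total weight of all its edges. -/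
def sizeW {C : Type*} [Fintype C] (μ : C → C → ℕ) : ℕ :=
  ∑ x : C, ∑ y : C, μ x y

/-- The maximin score of `c` in `μ`: its worst performance `min_{c' ≠ c} μ(c,c')`. -/
noncomputable def mmScore {C : Type*} (μ : C → C → ℕ) (c : C) : ℕ :=
  sInf {k : ℕ | ∃ c' : C, c' ≠ c ∧ μ c c' = k}

/-- `c` is a maximin winner: its maximin score is maximal. -/
def InMM {C : Type*} (μ : C → C → ℕ) (c : C) : Prop :=
  ∀ c' : C, mmScore μ c' ≤ mmScore μ c

/-- `w` is a necessary winner of maximin in the partial `n`-weighted tournament `μX`. -/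
def NWMM {C : Type*} (n : ℕ) (μX : C → C → ℕ) (w : C) : Prop :=
  ∀ μ' : C → C → ℕ, ExtW μX μ' → IsCompleteW n μ' → InMM μ' w

/-- `μX` is a minimal support for `w ∈ MM(μ)`. -/
def MSMM {C : Type*} (n : ℕ) (μ μX : C → C → ℕ) (w : C) : Prop :=
  ExtW μX μ ∧ NWMM n μX w ∧
    ∀ μY : C → C → ℕ, ExtW μY μX → μY ≠ μX → ¬ NWMM n μY w

/-- `μX` is a smallest minimal support for `w ∈ MM(μ)`. -/
def SMSMM {C : Type*} [Fintype C] (n : ℕ) (μ μX : C → C → ℕ) (w : C) : Prop :=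
  MSMM n μ μX w ∧ ∀ μY : C → C → ℕ, MSMM n μ μY w → sizeW μX ≤ sizeW μY

/-!
Let `s` be the maximin score of `w` in a partial tournament `X`. Then `w` is a necessary winner in
`X` iff every other candidate `c` has an incoming edge of weight at least `n - s` in `X`: such an
edge caps the score of `c` at `s` in every completion, and without one, the completion that gives
`w` nothing beyond `X` and `c` everything possible makes `c` beat `w`.

Lower bound: in a support `X ⊆ G` the edge `w → c` carries at least `s`, so with the blocking edge
the edges into `c ≠ w` carry at least `n`, unless the blocking edge is `w → c` itself; then
`μ_X(w,c) ≥ max(s, n - s) ≥ n - t`, which needs `μ(w,c) ≥ n - t`.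
Upper bound: keep weight `n - t` on `w → c` if `μ(w,c) ≥ n - t`; otherwise keep `t` on it and `n - t`
on the edge into `c` from its maximin opponent (available since then `t = σ_w ≥ σ_c`). This support
has exactly the claimed size and contains a minimal support.
-/

open Finset Function

section Basic

variable {C : Type*} {n : ℕ} {μ μ' μ'' : C → C → ℕ} {c c' w : C}

lemma mmScore_le (h : c' ≠ c) : mmScore μ c ≤ μ c c' :=
  Nat.sInf_le ⟨c', h, rfl⟩

lemma exists_eq_mmScore (h : c' ≠ c) : ∃ d, d ≠ c ∧ μ c d = mmScore μ c :=
  Nat.sInf_mem (s := {k | ∃ d, d ≠ c ∧ μ c d = k}) ⟨μ c c', c', h, rfl⟩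

lemma le_mmScore {k : ℕ} (h : c' ≠ c) (hk : ∀ d, d ≠ c → k ≤ μ c d) : k ≤ mmScore μ c := by
  obtain ⟨d, hd, hμ⟩ := exists_eq_mmScore (μ := μ) h
  exact hμ ▸ hk d hd

lemma mmScore_mono (hE : ExtW μ μ') (h : c' ≠ c) : mmScore μ c ≤ mmScore μ' c :=
  le_mmScore h fun d hd => (mmScore_le hd).trans (hE c d)

-- Arbitrary when `c` is the only candidate.
noncomputable def mmOpponent (μ : C → C → ℕ) (c : C) : C :=
  letI : Nonempty C := ⟨c⟩
  Classical.epsilon fun d => d ≠ c ∧ μ c d = mmScore μ c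

lemma mmOpponent_spec (h : c' ≠ c) :
    mmOpponent μ c ≠ c ∧ μ c (mmOpponent μ c) = mmScore μ c :=
  Classical.epsilon_spec (exists_eq_mmScore h)

lemma ExtW.trans (h : ExtW μ μ') (h' : ExtW μ' μ'') : ExtW μ μ'' :=
  fun x y => (h x y).trans (h' x y)

lemma IsCompleteW.isPartialW_of_extW (hG : IsCompleteW n μ) (hE : ExtW μ' μ) :
    IsPartialW n μ' := by
  refine ⟨fun x => Nat.eq_zero_of_le_zero (hG.1 x ▸ hE x x), fun x y hxy => ?_⟩
  have := hG.2 x y hxy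
  have := hE x y
  have := hE y x
  omega

lemma sizeW_lt_of_extW_of_ne [Fintype C] (hE : ExtW μ μ') (hne : μ ≠ μ') :
    sizeW μ < sizeW μ' := by
  rw [sizeW, sizeW, ← Fintype.sum_prod_type', ← Fintype.sum_prod_type']
  refine Fintype.sum_strictMono (lt_of_le_of_ne (fun p => hE p.1 p.2) fun h => hne ?_)
  funext x y
  exact congrFun h (x, y)

end Basic

lemma exists_msmm_sizeW_le {C : Type*} [Fintype C] {n : ℕ} {μ μZ : C → C → ℕ} {w : C}
    (hE : ExtW μZ μ) (hNW : NWMM n μZ w) :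
    ∃ μY, MSMM n μ μY w ∧ sizeW μY ≤ sizeW μZ := by
  obtain ⟨μY, ⟨hYZ, hYNW⟩, hmin⟩ := (measure (sizeW (C := C))).wf.has_min
    {μY | ExtW μY μZ ∧ NWMM n μY w} ⟨μZ, fun _ _ => le_rfl, hNW⟩
  refine ⟨μY, ⟨hYZ.trans hE, hYNW, fun μV hVY hne hVNW => ?_⟩,
    not_lt.1 (hmin μZ ⟨fun _ _ => le_rfl, hNW⟩)⟩
  exact hmin μV ⟨hVY.trans hYZ, hVNW⟩ (sizeW_lt_of_extW_of_ne hVY hne)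

section Completion

variable {C α : Type*} [DecidableEq C] [LinearOrder α] {n : ℕ} {μ : C → C → ℕ}

def completeBy (n : ℕ) (μ : C → C → ℕ) (key : C → α) : C → C → ℕ :=
  fun x y => if x = y then 0 else if key y < key x then n - μ y x else μ x y

lemma extW_completeBy (hP : IsPartialW n μ) (key : C → α) : ExtW μ (completeBy n μ key) := by
  intro x y
  by_cases hxy : x = y
  · subst hxy
    simp [completeBy, hP.1 x]
  · have := hP.2 x y hxy
    unfold completeBy
    split_ifs <;> omega

lemma isCompleteW_completeBy (hP : IsPartialW n μ) {key : C → α} (hkey : Injective key) :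
    IsCompleteW n (completeBy n μ key) := by
  refine ⟨fun x => if_pos rfl, fun x y hxy => ?_⟩
  have := hP.2 x y hxy
  have hne : key x ≠ key y := hkey.ne hxy
  simp only [completeBy, if_neg hxy, if_neg (Ne.symm hxy)]
  rcases hne.lt_or_gt with h | h
  · rw [if_neg h.not_gt, if_pos h]
    omega
  · rw [if_pos h, if_neg h.not_gt]
    omega

lemma exists_completion_favoring [Fintype C] (hP : IsPartialW n μ) {w c : C} (hc : c ≠ w) :
    ∃ μ', ExtW μ μ' ∧ IsCompleteW n μ' ∧
      (∀ y, y ≠ w → μ' w y = μ w y) ∧ ∀ y, y ≠ c → μ' c y = n - μ y c := by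
  let rank : C → ℕ := fun x => if x = w then 0 else if x = c then 2 else 1
  let key : C → ℕ ×ₗ Fin (Fintype.card C) := fun x => toLex (rank x, Fintype.equivFin C x)
  have hkey : Injective key := fun x y h =>
    (Fintype.equivFin C).injective (Prod.ext_iff.1 (toLex.injective h)).2
  have hrank : ∀ x y, rank x < rank y → key x < key y := fun x y h =>
    Prod.Lex.toLex_lt_toLex.2 (Or.inl h)
  refine ⟨completeBy n μ key, extW_completeBy hP key, isCompleteW_completeBy hP hkey,
    fun y hy => ?_, fun y hy => ?_⟩
  · have : key w < key y := hrank w y (by simp only [rank]; split_ifs <;> simp_all)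
    simp only [completeBy, if_neg (Ne.symm hy), if_neg this.not_gt]
  · have : key y < key c := hrank y c (by simp only [rank]; split_ifs <;> simp_all)
    simp only [completeBy, if_neg (Ne.symm hy), if_pos this]

end Completion

theorem nwmm_iff {C : Type*} [Fintype C] [DecidableEq C] {n : ℕ} {μ : C → C → ℕ} {w : C}
    (hP : IsPartialW n μ) :
    NWMM n μ w ↔ ∀ c, c ≠ w → ∃ c', c' ≠ c ∧ n - mmScore μ w ≤ μ c' c := by
  constructor
  · intro hNW c hc
    by_contra! hcon
    obtain ⟨μ', hE, hG, hw, hc'⟩ := exists_completion_favoring hP hc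
    obtain ⟨d, hd, hμd⟩ := exists_eq_mmScore (μ := μ) hc
    have hw_le : mmScore μ' w ≤ mmScore μ w :=
      calc mmScore μ' w ≤ μ' w d := mmScore_le hd
        _ = mmScore μ w := (hw d hd).trans hμd
    have hc_gt : mmScore μ w < mmScore μ' c := by
      refine le_mmScore (Ne.symm hc) fun y hy => ?_
      have := hcon y hy
      rw [hc' y hy]
      omega
    exact absurd (hNW μ' hE hG c) (hw_le.trans_lt hc_gt).not_ge
  · intro hblock μ' hE hG c
    by_cases hc : c = w
    · rw [hc]
    obtain ⟨c', hc', hμc'⟩ := hblock c hc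
    have := hG.2 c' c hc'
    have := hE c' c
    have := mmScore_le (μ := μ') hc'
    have := mmScore_mono hE hc (c := w)
    omega

section LowerBound

variable {C : Type*} [Fintype C] [DecidableEq C] {n t : ℕ} {μ μZ : C → C → ℕ} {w : C}

-- The least weight a necessary-winner support inside `G` puts on the edges into `y`.
def minInWeight (n t : ℕ) (μ : C → C → ℕ) (w y : C) : ℕ :=
  if y = w then 0 else if n - t ≤ μ w y then n - t else n

lemma sum_minInWeight (hww : μ w w = 0) (ht : t ≤ n / 2) :
    ∑ y, minInWeight n t μ w y =
      n * (Fintype.card C - 1) - t * (univ.filter fun c : C => n - t ≤ μ w c).card := by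
  have hcomp : ∀ y, minInWeight n t μ w y + (if n - t ≤ μ w y then t else 0) =
      if y ≠ w then n else 0 := by
    intro y
    by_cases hy : y = w
    · subst hy
      simp only [minInWeight, hww, ne_eq, not_true_eq_false, if_false]
      split_ifs <;> omega
    · simp only [minInWeight, if_neg hy, if_pos hy]
      split_ifs <;> omega
  have hsum := sum_congr rfl fun y (_ : y ∈ univ) => hcomp y
  rw [sum_add_distrib, ← sum_filter, ← sum_filter, filter_ne', sum_const, sum_const,
    card_erase_of_mem (mem_univ w), card_univ, smul_eq_mul, smul_eq_mul] at hsum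
  rw [mul_comm n, mul_comm t]
  omega

lemma minInWeight_le_sum_of_nwmm (hG : IsCompleteW n μ) (hE : ExtW μZ μ) (hNW : NWMM n μZ w)
    (ht : min (mmScore μ w) (n / 2) ≤ t) (y : C) :
    minInWeight n t μ w y ≤ ∑ x, μZ x y := by
  by_cases hy : y = w
  · simp [minInWeight, hy]
  have hP := hG.isPartialW_of_extW hE
  obtain ⟨c', hc', hblock⟩ := (nwmm_iff hP).1 hNW y hy
  have := mmScore_mono hE hy
  have := mmScore_le (μ := μZ) hy
  have := hP.2 w y (Ne.symm hy)
  by_cases hc'w : c' = w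
  · subst hc'w
    have hwy : n - t ≤ μZ c' y := by omega
    calc minInWeight n t μ c' y = n - t := by simp [minInWeight, hy, hwy.trans (hE c' y)]
      _ ≤ μZ c' y := hwy
      _ ≤ ∑ x, μZ x y := single_le_sum (f := (μZ · y)) (fun _ _ => Nat.zero_le _) (mem_univ _)
  · calc minInWeight n t μ w y ≤ n := by unfold minInWeight; split_ifs <;> omega
      _ ≤ μZ w y + μZ c' y := by omega
      _ = ∑ x ∈ {w, c'}, μZ x y := (sum_pair (f := (μZ · y)) (Ne.symm hc'w)).symm
      _ ≤ ∑ x, μZ x y := sum_le_sum_of_subset (subset_univ _)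

lemma le_sizeW_of_nwmm (hG : IsCompleteW n μ) (hE : ExtW μZ μ) (hNW : NWMM n μZ w)
    (ht : min (mmScore μ w) (n / 2) ≤ t) (ht' : t ≤ n / 2) :
    n * (Fintype.card C - 1) - t * (univ.filter fun c : C => n - t ≤ μ w c).card ≤ sizeW μZ :=
  calc _ = ∑ y, minInWeight n t μ w y := (sum_minInWeight (hG.1 w) ht').symm
    _ ≤ ∑ y, ∑ x, μZ x y := sum_le_sum fun y _ => minInWeight_le_sum_of_nwmm hG hE hNW ht y
    _ = sizeW μZ := sum_comm

end LowerBound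

section UpperBound

variable {C : Type*} {n t : ℕ} {μ : C → C → ℕ} {w y : C}

lemma mmOpponent_blocks (hG : IsCompleteW n μ) (hw : InMM μ w)
    (ht : t = min (mmScore μ w) (n / 2)) (hy : y ≠ w) (hlt : μ w y < n - t) :
    mmOpponent μ y ≠ y ∧ mmOpponent μ y ≠ w ∧ n - t ≤ μ (mmOpponent μ y) y := by
  obtain ⟨hne, hμ⟩ := mmOpponent_spec (μ := μ) (Ne.symm hy)
  have := hw y
  have := mmScore_le (μ := μ) hy
  have hsum := hG.2 y _ (Ne.symm hne)
  refine ⟨hne, fun hbw => ?_, by omega⟩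
  rw [hbw] at hsum hμ
  omega

variable [DecidableEq C]

noncomputable def supportMM (n t : ℕ) (μ : C → C → ℕ) (w : C) : C → C → ℕ := fun x y =>
  if y = w then 0
  else if x = w then (if n - t ≤ μ w y then n - t else t)
  else if x = mmOpponent μ y ∧ μ w y < n - t then n - t else 0

lemma extW_supportMM (hG : IsCompleteW n μ) (hw : InMM μ w)
    (ht : t = min (mmScore μ w) (n / 2)) : ExtW (supportMM n t μ w) μ := by
  intro x y
  unfold supportMM
  split_ifs with hy hx hwy hb
  · exact Nat.zero_le _
  · exact hx ▸ hwy
  · subst hx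
    have := mmScore_le (μ := μ) hy
    omega
  · exact hb.1 ▸ (mmOpponent_blocks hG hw ht hy hb.2).2.2
  · exact Nat.zero_le _

variable [Fintype C]

lemma sum_supportMM (hG : IsCompleteW n μ) (hw : InMM μ w)
    (ht : t = min (mmScore μ w) (n / 2)) (y : C) :
    ∑ x, supportMM n t μ w x y = minInWeight n t μ w y := by
  by_cases hy : y = w
  · simp [supportMM, minInWeight, hy]
  rw [← add_sum_erase _ _ (mem_univ w)]
  by_cases hlt : μ w y < n - t
  · have hb := mmOpponent_blocks hG hw ht hy hlt
    have hcol : ∀ x ∈ univ.erase w, supportMM n t μ w x y =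
        if x = mmOpponent μ y then n - t else 0 := by
      intro x hx
      simp only [supportMM, if_neg hy, if_neg (ne_of_mem_erase hx), hlt, and_true]
    rw [sum_congr rfl hcol, sum_ite_eq', if_pos (mem_erase.2 ⟨hb.2.1, mem_univ _⟩)]
    simp only [supportMM, minInWeight, if_neg hy, if_neg hlt.not_ge, ↓reduceIte]
    omega
  · have hcol : ∀ x ∈ univ.erase w, supportMM n t μ w x y = 0 := by
      intro x hx
      simp [supportMM, hy, ne_of_mem_erase hx, hlt]
    rw [sum_eq_zero hcol]
    simp [supportMM, minInWeight, hy, not_lt.1 hlt]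

lemma sizeW_supportMM (hG : IsCompleteW n μ) (hw : InMM μ w)
    (ht : t = min (mmScore μ w) (n / 2)) :
    sizeW (supportMM n t μ w) =
      n * (Fintype.card C - 1) - t * (univ.filter fun c : C => n - t ≤ μ w c).card := by
  rw [sizeW, sum_comm, ← sum_minInWeight (hG.1 w) (ht ▸ min_le_right _ _)]
  exact sum_congr rfl fun y _ => sum_supportMM hG hw ht y

lemma nwmm_supportMM (hG : IsCompleteW n μ) (hw : InMM μ w)
    (ht : t = min (mmScore μ w) (n / 2)) : NWMM n (supportMM n t μ w) w := by
  refine (nwmm_iff (hG.isPartialW_of_extW (extW_supportMM hG hw ht))).2 fun c hc => ?_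
  have hs : t ≤ mmScore (supportMM n t μ w) w := by
    refine le_mmScore hc fun y hy => ?_
    simp only [supportMM, if_neg hy, ↓reduceIte]
    split_ifs <;> omega
  by_cases hlt : μ w c < n - t
  · obtain ⟨hb, hbw, -⟩ := mmOpponent_blocks hG hw ht hc hlt
    refine ⟨mmOpponent μ c, hb, ?_⟩
    simp only [supportMM, if_neg hc, if_neg hbw, hlt, and_self, ↓reduceIte]
    omega
  · refine ⟨w, Ne.symm hc, ?_⟩
    simp only [supportMM, if_neg hc, if_pos (not_lt.1 hlt), ↓reduceIte]
    omega

end UpperBound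

theorem stmt8_general {C : Type*} [Fintype C]
    (n m : ℕ) (hm : Fintype.card C = m)
    (μ : C → C → ℕ) (hG : IsCompleteW n μ)
    (w : C) (hw : InMM μ w) (μX : C → C → ℕ) (hX : SMSMM n μ μX w) :
    sizeW μX =
      n * (m - 1) -
        min (mmScore μ w) (n / 2) *
          (Finset.univ.filter
            (fun c : C => n - min (mmScore μ w) (n / 2) ≤ μ w c)).card := by
  classical
  subst hm
  obtain ⟨μY, hY, hYZ⟩ :=
    exists_msmm_sizeW_le (extW_supportMM hG hw rfl) (nwmm_supportMM hG hw rfl)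
  refine le_antisymm ?_ (le_sizeW_of_nwmm hG hX.1.1 hX.1.2.1 le_rfl (min_le_right _ _))
  calc sizeW μX ≤ sizeW μY := hX.2 μY hY
    _ ≤ _ := hYZ
    _ = _ := sizeW_supportMM hG hw rfl

/-- Size of smallest minimal supports for maximin: with `t = min(σ_w, ⌊n/2⌋)`,
every SMS `μX` for `w ∈ MM(μ)` has size
`n(m-1) - t · |{c : μ(w,c) ≥ n - t}|`. -/
theorem stmt8 {C : Type*} [Fintype C] [DecidableEq C] [Nonempty C]
    (n m : ℕ) (hn : 0 < n) (hm : Fintype.card C = m)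
    (μ : C → C → ℕ) (hG : IsCompleteW n μ)
    (w : C) (hw : InMM μ w) (μX : C → C → ℕ) (hX : SMSMM n μ μX w) :
    sizeW μX =
      n * (m - 1) -
        min (mmScore μ w) (n / 2) *
          (Finset.univ.filter
            (fun c : C => n - min (mmScore μ w) (n / 2) ≤ μ w c)).card :=
  stmt8_general n m hm μ hG w hw μX hX
end

section
/- Let G = (C, μ) be a partial n-weighted tournament with |C| = m candidates and let w ∈ C. Then w is a necessary winner of the Borda rule in G if and only if for every candidate c ∈ C \ {w}, Σ_{c'∈C} μ(w, c') ≥ n(m − 1) − Σ_{c'∈C} μ(c', c); equivalently, the minimal possible Borda score of w over completions of G is at least the maximal possible Borda score of c over completions of G, for every c ≠ w. -/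
/-- The Borda score of `c` in `μ`: the total number of pairwise comparisons won. -/
def bScore {C : Type*} [Fintype C] (μ : C → C → ℕ) (c : C) : ℕ :=
  ∑ c' : C, μ c c'

/-- `c` is a Borda winner: its Borda score is maximal. -/
def InBorda {C : Type*} [Fintype C] (μ : C → C → ℕ) (c : C) : Prop :=
  ∀ c' : C, bScore μ c' ≤ bScore μ c

/-- `w` is a necessary winner of Borda in the partial `n`-weighted tournament `μX`. -/
def NWB {C : Type*} [Fintype C] (n : ℕ) (μX : C → C → ℕ) (w : C) : Prop :=
  ∀ μ' : C → C → ℕ, ExtW μX μ' → IsCompleteW n μ' → InBorda μ' w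

/-- `μX` is a minimal support for `w ∈ Borda(μ)`. -/
def MSB {C : Type*} [Fintype C] (n : ℕ) (μ μX : C → C → ℕ) (w : C) : Prop :=
  ExtW μX μ ∧ NWB n μX w ∧
    ∀ μY : C → C → ℕ, ExtW μY μX → μY ≠ μX → ¬ NWB n μY w

/-- `μX` is a smallest minimal support for `w ∈ Borda(μ)`. -/
def SMSB {C : Type*} [Fintype C] (n : ℕ) (μ μX : C → C → ℕ) (w : C) : Prop :=
  MSB n μ μX w ∧ ∀ μY : C → C → ℕ, MSB n μ μY w → sizeW μX ≤ sizeW μY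

/-- `min_{c ≠ w} μ(w, c)`: the worst performance of `w` in a head-to-head. -/
noncomputable def minOpp {C : Type*} (μ : C → C → ℕ) (w : C) : ℕ :=
  sInf {k : ℕ | ∃ c : C, c ≠ w ∧ μ w c = k}

/-!
In every completion `μ'` of `μ`, the score of `c` is `n (m - 1)` minus the total weight against
`c`, hence at most `n (m - 1) - ∑ c', μ c' c`, while the score of `w` is at least
`∑ c', μ w c'`. Both bounds are attained at once by the completion that settles every undecided
pair along a ranking with `c` first and `w` last, so the condition is also necessary.
-/

open Finset

lemma IsCompleteW.bScore_add_sum_against {C : Type*} [Fintype C] {n : ℕ} {μ : C → C → ℕ}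
    (h : IsCompleteW n μ) (c : C) :
    bScore μ c + ∑ c' : C, μ c' c = n * (Fintype.card C - 1) := by
  classical
  have hpair : ∀ x ∈ univ.erase c, μ c x + μ x c = n := fun x hx =>
    h.2 c x (ne_of_mem_erase hx).symm
  rw [bScore, ← sum_add_distrib, ← add_sum_erase _ _ (mem_univ c), h.1 c, sum_congr rfl hpair,
    sum_const, card_erase_of_mem (mem_univ c), card_univ, smul_eq_mul]
  ring

lemma ExtW.bScore_le {C : Type*} [Fintype C] {μ μ' : C → C → ℕ} (h : ExtW μ μ') (c : C) :
    bScore μ c ≤ bScore μ' c :=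
  sum_le_sum fun c' _ => h c c'

lemma ExtW.bScore_le_of_isCompleteW {C : Type*} [Fintype C] {n : ℕ} {μ μ' : C → C → ℕ}
    (h : ExtW μ μ') (hμ' : IsCompleteW n μ') (c : C) :
    bScore μ' c ≤ n * (Fintype.card C - 1) - ∑ c' : C, μ c' c := by
  have hcol : ∑ c' : C, μ c' c ≤ ∑ c' : C, μ' c' c := sum_le_sum fun c' _ => h c' c
  have := hμ'.bScore_add_sum_against c
  omega

section completion

variable {C α : Type*} [DecidableEq C] [LinearOrder α]

def completeAlong (n : ℕ) (μ : C → C → ℕ) (k : C → α) (x y : C) : ℕ :=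
  if x = y then 0 else if k x < k y then n - μ y x else μ x y

variable {n : ℕ} {μ : C → C → ℕ} {k : C → α}

lemma extW_completeAlong (hμ : IsPartialW n μ) : ExtW μ (completeAlong n μ k) := by
  intro x y
  unfold completeAlong
  split_ifs with hxy hlt
  · simp [hxy, hμ.1]
  · have := hμ.2 x y hxy
    omega
  · rfl

lemma isCompleteW_completeAlong (hμ : IsPartialW n μ) (hk : Function.Injective k) :
    IsCompleteW n (completeAlong n μ k) := by
  refine ⟨fun x => if_pos rfl, fun x y hxy => ?_⟩
  have hne : k x ≠ k y := hk.ne hxy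
  have hxy' := hμ.2 x y hxy
  have hyx' := hμ.2 y x hxy.symm
  unfold completeAlong
  rcases hne.lt_or_gt with hlt | hgt
  · simp only [if_neg hxy, if_neg hxy.symm, if_pos hlt, if_neg hlt.not_gt]
    omega
  · simp only [if_neg hxy, if_neg hxy.symm, if_neg hgt.not_gt, if_pos hgt]
    omega

lemma completeAlong_of_lt {x y : C} (h : k y < k x) : completeAlong n μ k x y = μ x y := by
  unfold completeAlong
  split_ifs with hxy hlt
  · simp [hxy] at h
  · exact absurd h hlt.not_gt
  · rfl

end completion

lemma IsPartialW.exists_completion_fixing_row_column {C : Type*} [Fintype C] {n : ℕ} {μ : C → C → ℕ}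
    (hμ : IsPartialW n μ) {w c : C} (hcw : c ≠ w) :
    ∃ μ', ExtW μ μ' ∧ IsCompleteW n μ' ∧ bScore μ' w = bScore μ w ∧
      ∑ c' : C, μ' c' c = ∑ c' : C, μ c' c := by
  classical
  let e := Fintype.equivFin C
  let k : C → ℤ := fun x => if x = c then -1 else if x = w then Fintype.card C else e x
  have hk : Function.Injective k := by
    intro x y hxy
    have hx := (e x).isLt
    have hy := (e y).isLt
    simp only [k] at hxy
    split_ifs at hxy <;> first | (subst_vars; rfl) | omega | exact e.injective (Fin.ext (by omega))
  have hkc : ∀ y ≠ c, k c < k y := fun y hy => by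
    have := (e y).isLt
    simp only [k, if_pos rfl, if_neg hy]
    split_ifs <;> omega
  have hkw : ∀ y ≠ w, k y < k w := fun y hy => by
    have := (e y).isLt
    simp only [k, if_neg hcw.symm, if_neg hy]
    split_ifs <;> omega
  have hdiag : ∀ x, completeAlong n μ k x x = μ x x := fun x => by simp [completeAlong, hμ.1]
  refine ⟨completeAlong n μ k, extW_completeAlong hμ, isCompleteW_completeAlong hμ hk,
    sum_congr rfl fun y _ => ?_, sum_congr rfl fun y _ => ?_⟩
  · rcases eq_or_ne y w with rfl | hy
    · exact hdiag y
    · exact completeAlong_of_lt (hkw y hy)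
  · rcases eq_or_ne y c with rfl | hy
    · exact hdiag y
    · exact completeAlong_of_lt (hkc y hy)

theorem stmt15_general {C : Type*} [Fintype C]
    (n m : ℕ) (hm : Fintype.card C = m)
    (μ : C → C → ℕ) (hG : IsPartialW n μ) (w : C) :
    NWB n μ w ↔
      ∀ c : C, c ≠ w →
        n * (m - 1) - ∑ c' : C, μ c' c ≤ ∑ c' : C, μ w c' := by
  subst hm
  refine ⟨fun hw c hcw => ?_, fun h μ' hext hμ' c => ?_⟩
  · obtain ⟨μ', hext, hμ', hw', hc'⟩ := hG.exists_completion_fixing_row_column hcw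
    have hsum := hμ'.bScore_add_sum_against c
    have hwin : bScore μ' c ≤ bScore μ' w := hw μ' hext hμ' c
    rw [hc'] at hsum
    change _ ≤ bScore μ w
    omega
  · rcases eq_or_ne c w with rfl | hcw
    · exact le_rfl
    exact (hext.bScore_le_of_isCompleteW hμ' c).trans ((h c hcw).trans (hext.bScore_le w))

/-- Characterization of necessary Borda winners in a partial `n`-weighted
tournament: `w` is a necessary winner iff for every `c ≠ w`,
`Σ_{c'} μ(w,c') ≥ n(m-1) - Σ_{c'} μ(c',c)`, i.e. the minimal possible Borda
score of `w` is at least the maximal possible Borda score of `c`. -/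
theorem stmt15 {C : Type*} [Fintype C] [DecidableEq C] [Nonempty C]
    (n m : ℕ) (hn : 0 < n) (hm : Fintype.card C = m)
    (μ : C → C → ℕ) (hG : IsPartialW n μ) (w : C) :
    NWB n μ w ↔
      ∀ c : C, c ≠ w →
        n * (m - 1) - ∑ c' : C, μ c' c ≤ ∑ c' : C, μ w c' :=
  stmt15_general n m hm μ hG w
end

section
/- Let G = (C, μ) be a complete n-weighted tournament with |C| = m ≥ 3 candidates and let w ∈ Borda(G) be a Borda winner of G. Then every minimal support X for w ∈ Borda(G) satisfies |X| ≥ n(m − 1) − ⌊n(1 − 1/m)⌋, i.e., |X| ≥ ⌈n(m − 1)²/m⌉. -/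
section

variable {C : Type*} {n : ℕ} {μ μX : C → C → ℕ}

theorem IsPartialW.of_extW (hG : IsCompleteW n μ) (h : ExtW μX μ) : IsPartialW n μX := by
  refine ⟨fun x => by simpa [hG.1 x] using h x x, fun x y hxy => ?_⟩
  have := hG.2 x y hxy
  have := h x y
  have := h y x
  omega

theorem IsPartialW.le (hX : IsPartialW n μX) (x y : C) : μX x y ≤ n := by
  rcases eq_or_ne x y with rfl | hxy
  · simp [hX.1 x]
  · have := hX.2 x y hxy
    omega

def favoringCompletion {α : Type*} [LinearOrder α] (n : ℕ) (μX : C → C → ℕ) (r : C → α)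
    (x y : C) : ℕ :=
  if r y < r x then n - μX y x else μX x y

section favoringCompletion

variable {α : Type*} [LinearOrder α] {r : C → α}

theorem extW_favoringCompletion (hX : IsPartialW n μX) : ExtW μX (favoringCompletion n μX r) := by
  intro x y
  unfold favoringCompletion
  split_ifs with hlt
  · have := hX.2 x y (fun h => (h ▸ hlt).false)
    omega
  · exact le_rfl

theorem isCompleteW_favoringCompletion (hX : IsPartialW n μX) (hr : Function.Injective r) :
    IsCompleteW n (favoringCompletion n μX r) := by
  refine ⟨fun x => by simp [favoringCompletion, hX.1 x], fun x y hxy => ?_⟩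
  rcases (hr.ne hxy).lt_or_gt with hlt | hlt
  · simp only [favoringCompletion, hlt.not_gt, hlt, if_true, if_false]
    have := hX.le x y
    omega
  · simp only [favoringCompletion, hlt.not_gt, hlt, if_true, if_false]
    have := hX.le y x
    omega

end favoringCompletion

theorem IsPartialW.exists_completion_eq_of_lt [Fintype C] (hX : IsPartialW n μX) (p : C → ℕ) :
    ∃ μ', ExtW μX μ' ∧ IsCompleteW n μ' ∧ ∀ x y, p x < p y → μ' x y = μX x y := by
  set e := Fintype.equivFin C
  let r : C → ℕ ×ₗ Fin (Fintype.card C) := fun x => toLex (p x, e x)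
  have hr : Function.Injective r := fun x y h => e.injective (congrArg Prod.snd (toLex.injective h))
  refine ⟨favoringCompletion n μX r, extW_favoringCompletion hX,
    isCompleteW_favoringCompletion hX hr, fun x y h => ?_⟩
  simp [favoringCompletion, r, Prod.Lex.toLex_lt_toLex, h.not_gt, h.ne']

section Borda

variable [Fintype C]

theorem IsCompleteW.bScore_add_sum_eq (hμ : IsCompleteW n μ) (c : C) :
    bScore μ c + ∑ x, μ x c = (Fintype.card C - 1) * n := by
  classical
  rw [bScore, ← Finset.sum_add_distrib, ← Finset.sum_erase_add _ _ (Finset.mem_univ c), hμ.1 c,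
    Finset.sum_congr rfl fun x hx => hμ.2 c x (Finset.ne_of_mem_erase hx).symm, Finset.sum_const,
    Finset.card_erase_of_mem (Finset.mem_univ c), Finset.card_univ, smul_eq_mul, add_zero, add_zero]

theorem IsPartialW.mul_card_pred_le_bScore_add_sum (hX : IsPartialW n μX) {w c : C}
    (hNW : NWB n μX w) (hcw : c ≠ w) :
    n * (Fintype.card C - 1) ≤ bScore μX w + ∑ x, μX x c := by
  classical
  obtain ⟨μ', hext, hcomp, hμ'⟩ :=
    hX.exists_completion_eq_of_lt (fun x => if x = c then 2 else if x = w then 0 else 1)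
  have hcol : ∑ x, μ' x c = ∑ x, μX x c := Finset.sum_congr rfl fun x _ => by
    rcases eq_or_ne x c with rfl | hx
    · rw [hcomp.1, hX.1]
    · exact hμ' x c (by simp only [hx, if_true, if_false]; split_ifs <;> omega)
  have hrow : bScore μ' w = bScore μX w := Finset.sum_congr rfl fun y _ => by
    rcases eq_or_ne y w with rfl | hy
    · rw [hcomp.1, hX.1]
    · exact hμ' w y (by simp only [hcw.symm, hy, if_true, if_false]; split_ifs <;> omega)
  calc n * (Fintype.card C - 1) = bScore μ' c + ∑ x, μ' x c := by
        rw [hcomp.bScore_add_sum_eq, mul_comm]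
    _ ≤ bScore μ' w + ∑ x, μX x c := by rw [hcol]; gcongr; exact hNW μ' hext hcomp c
    _ = bScore μX w + ∑ x, μX x c := by rw [hrow]

theorem IsPartialW.mul_card_pred_sq_le_card_mul_sizeW (hX : IsPartialW n μX) {w : C}
    (hNW : NWB n μX w) : n * (Fintype.card C - 1) ^ 2 ≤ Fintype.card C * sizeW μX := by
  classical
  set m := Fintype.card C
  have hm : 0 < m := Fintype.card_pos_iff.2 ⟨w⟩
  have hcard : (Finset.univ.erase w).card = m - 1 := Finset.card_erase_of_mem (Finset.mem_univ w)
  have hsum : ∑ _c ∈ Finset.univ.erase w, n * (m - 1) ≤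
      ∑ c ∈ Finset.univ.erase w, (bScore μX w + ∑ x, μX x c) :=
    Finset.sum_le_sum fun c hc => hX.mul_card_pred_le_bScore_add_sum hNW (Finset.ne_of_mem_erase hc)
  rw [Finset.sum_add_distrib, Finset.sum_const, Finset.sum_const, hcard, smul_eq_mul,
    smul_eq_mul] at hsum
  have hrow : bScore μX w ≤ sizeW μX :=
    Finset.single_le_sum (f := fun x => ∑ y, μX x y) (fun _ _ => Nat.zero_le _) (Finset.mem_univ w)
  have hcols : ∑ c ∈ Finset.univ.erase w, ∑ x, μX x c ≤ sizeW μX :=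
    (Finset.sum_le_sum_of_subset (Finset.erase_subset w _)).trans_eq Finset.sum_comm
  calc n * (m - 1) ^ 2 = (m - 1) * (n * (m - 1)) := by ring
    _ ≤ (m - 1) * bScore μX w + ∑ c ∈ Finset.univ.erase w, ∑ x, μX x c := hsum
    _ ≤ (m - 1) * sizeW μX + sizeW μX := by gcongr
    _ = m * sizeW μX := by rw [← Nat.add_one_mul, Nat.sub_add_cancel hm]

end Borda

theorem Nat.sub_div_le_of_mul_pred_le {k m s : ℕ} (hm : 0 < m) (h : k * (m - 1) ≤ m * s) :
    k - k / m ≤ s := by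
  have hk : k * m = k * (m - 1) + k := by rw [← Nat.mul_add_one, Nat.sub_add_cancel hm]
  rw [tsub_le_iff_tsub_le, Nat.le_div_iff_mul_le hm, Nat.sub_mul, mul_comm s]
  omega

end

theorem stmt17_general {C : Type*} [Fintype C]
    (n m : ℕ) (hm : Fintype.card C = m)
    (μ : C → C → ℕ) (hG : IsCompleteW n μ)
    (w : C) (μX : C → C → ℕ) (hX : MSB n μ μX w) :
    n * (m - 1) - n * (m - 1) / m ≤ sizeW μX ∧
    (n * (m - 1) ^ 2 + m - 1) / m ≤ sizeW μX := by
  have hm0 : 0 < m := hm ▸ Fintype.card_pos_iff.2 ⟨w⟩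
  have hbound : n * (m - 1) ^ 2 ≤ m * sizeW μX :=
    hm ▸ (IsPartialW.of_extW hG hX.1).mul_card_pred_sq_le_card_mul_sizeW hX.2.1
  refine ⟨Nat.sub_div_le_of_mul_pred_le hm0 (by rwa [mul_assoc, ← sq]), ?_⟩
  rw [Nat.div_le_iff_le_mul_add_pred hm0]
  omega

/-- Lower bound on minimal supports for Borda when `m ≥ 3`:
`|X| ≥ n(m-1) - ⌊n(1-1/m)⌋`, i.e. `|X| ≥ ⌈n(m-1)²/m⌉`
(note `⌊n(1-1/m)⌋ = ⌊n(m-1)/m⌋`). -/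
theorem stmt17 {C : Type*} [Fintype C] [DecidableEq C] [Nonempty C]
    (n m : ℕ) (hn : 0 < n) (hm : Fintype.card C = m) (hm3 : 3 ≤ m)
    (μ : C → C → ℕ) (hG : IsCompleteW n μ)
    (w : C) (hw : InBorda μ w) (μX : C → C → ℕ) (hX : MSB n μ μX w) :
    n * (m - 1) - n * (m - 1) / m ≤ sizeW μX ∧
    (n * (m - 1) ^ 2 + m - 1) / m ≤ sizeW μX :=
  stmt17_general n m hm μ hG w μX hX
end

section
/- Let G = (C, μ) be a complete n-weighted tournament with |C| = m candidates and let w ∈ Borda(G) be a Borda winner of G. Then every minimal support X for w ∈ Borda(G) satisfies |X| ≥ n(m − 1) − min_{c ≠ w} μ(w, c). -/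
/-!
Take a rival `c` minimising `μ(w, c)` and complete `X` against `w`: `w` keeps only the votes `X`
already gives it, while `c` receives every vote that `X` does not assign against it. As `w` must
still beat `c` there, the row of `w` and the column of `c` in `X` together carry at least
`n (m - 1)` votes. These two lines of `X` meet only in the entry `X(w, c) ≤ μ(w, c)`.
-/

section

variable {C : Type*}

theorem IsPartialW.add_le {n : ℕ} {ν : C → C → ℕ} (hν : IsPartialW n ν) (x y : C) :
    ν x y + ν y x ≤ n := by
  by_cases h : x = y
  · subst h
    simp [hν.1 x]
  · exact hν.2 x y h

theorem ExtW.isPartialW {n : ℕ} {ν μ : C → C → ℕ} (hνμ : ExtW ν μ) (hμ : IsCompleteW n μ) :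
    IsPartialW n ν := by
  refine ⟨fun x => Nat.eq_zero_of_le_zero (hμ.1 x ▸ hνμ x x), fun x y hxy => ?_⟩
  exact (add_le_add (hνμ x y) (hνμ y x)).trans (hμ.2 x y hxy).le

section withRow

variable [DecidableEq C] (n : ℕ) (μ : C → C → ℕ) (a : C) (r : C → ℕ)

def withRow : C → C → ℕ := fun x y =>
  if x = a ∧ y ≠ a then r y else if y = a ∧ x ≠ a then n - r x else μ x y

variable {a}

theorem withRow_left {y : C} (hy : y ≠ a) : withRow n μ a r a y = r y := by
  simp [withRow, hy]

theorem withRow_right {x : C} (hx : x ≠ a) : withRow n μ a r x a = n - r x := by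
  simp [withRow, hx]

theorem withRow_of_ne {x y : C} (hx : x ≠ a) (hy : y ≠ a) : withRow n μ a r x y = μ x y := by
  simp [withRow, hx, hy]

variable {n μ r}

theorem IsCompleteW.withRow (hμ : IsCompleteW n μ) (hr : ∀ y, r y ≤ n) :
    IsCompleteW n (withRow n μ a r) := by
  refine ⟨fun x => by simp [_root_.withRow, hμ.1 x], fun x y hxy => ?_⟩
  have := hr x
  have := hr y
  have := hμ.2 x y hxy
  simp only [_root_.withRow]
  split_ifs <;> grind

theorem ExtW.withRow {ν : C → C → ℕ} (hνμ : ExtW ν μ)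
    (hlo : ∀ y, ν a y ≤ r y) (hhi : ∀ y, r y + ν y a ≤ n) :
    ExtW ν (withRow n μ a r) := by
  intro x y
  have := hlo y
  have := hhi x
  have := hνμ x y
  simp only [_root_.withRow]
  split_ifs <;> grind

end withRow

theorem bScore_add_sum_col_le_sizeW_add [Fintype C] (ν : C → C → ℕ) (a b : C) :
    bScore ν a + ∑ x, ν x b ≤ sizeW ν + ν a b := by
  classical
  have hcol : ∑ x ∈ Finset.univ.erase a, ν x b ≤ ∑ x ∈ Finset.univ.erase a, bScore ν x :=
    Finset.sum_le_sum fun x _ => Finset.single_le_sum (fun y _ => Nat.zero_le (ν x y))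
      (Finset.mem_univ b)
  rw [sizeW, ← Finset.add_sum_erase _ _ (Finset.mem_univ a),
    ← Finset.add_sum_erase _ _ (Finset.mem_univ a)]
  simp only [bScore] at hcol ⊢
  omega

theorem exists_ne_apply_eq_minOpp {μ : C → C → ℕ} {w c : C} (hc : c ≠ w) :
    ∃ c, c ≠ w ∧ μ w c = minOpp μ w :=
  Nat.sInf_mem (s := {k | ∃ c, c ≠ w ∧ μ w c = k}) ⟨μ w c, c, hc, rfl⟩

theorem mul_card_sub_one_le_sizeW_add [Fintype C] {n : ℕ} {μ ν : C → C → ℕ} {w c : C}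
    (hμ : IsCompleteW n μ) (hνμ : ExtW ν μ) (hν : NWB n ν w) (hcw : c ≠ w) :
    n * (Fintype.card C - 1) ≤ sizeW ν + ν w c := by
  classical
  have hνp := hνμ.isPartialW hμ
  have hν_le : ∀ x y, ν x y ≤ n := fun x y => (Nat.le_add_right _ _).trans (hνp.add_le x y)
  -- The worst completion for `w`: `c` takes every vote `ν` leaves open, then `w` takes none.
  set μc := withRow n μ c (fun y => n - ν y c)
  set μw := withRow n μc w (ν w)
  have hμc : IsCompleteW n μc := hμ.withRow fun _ => Nat.sub_le n _
  have hνμc : ExtW ν μc :=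
    hνμ.withRow (fun y => Nat.le_sub_of_add_le (hνp.add_le c y))
      (fun y => (Nat.sub_add_cancel (hν_le y c)).le)
  have hμw : IsCompleteW n μw := hμc.withRow (hν_le w)
  have hνμw : ExtW ν μw := hνμc.withRow (fun _ => le_rfl) (hνp.add_le w)
  have hscore_w : bScore μw w = bScore ν w := Finset.sum_congr rfl fun y _ => by
    rcases eq_or_ne y w with rfl | hyw
    · rw [hμw.1, hνp.1]
    · exact withRow_left _ _ _ hyw
  have hrow_c : ∀ y ∈ Finset.univ.erase c, μw c y = n - ν y c := by
    intro y hy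
    rcases eq_or_ne y w with rfl | hyw
    · exact withRow_right _ _ _ hcw
    · exact (withRow_of_ne _ _ _ hcw hyw).trans (withRow_left _ _ _ (Finset.ne_of_mem_erase hy))
  calc n * (Fintype.card C - 1) = ∑ _y ∈ Finset.univ.erase c, n := by
        simp [Finset.card_erase_of_mem, mul_comm]
    _ = ∑ y ∈ Finset.univ.erase c, (μw c y + ν y c) :=
        Finset.sum_congr rfl fun y hy => by rw [hrow_c y hy, Nat.sub_add_cancel (hν_le y c)]
    _ = ∑ y ∈ Finset.univ.erase c, μw c y + ∑ y ∈ Finset.univ.erase c, ν y c :=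
        Finset.sum_add_distrib
    _ ≤ bScore μw c + ∑ y, ν y c :=
        add_le_add (Finset.sum_le_sum_of_subset (Finset.erase_subset c _))
          (Finset.sum_le_sum_of_subset (Finset.erase_subset c _))
    _ ≤ bScore μw w + ∑ y, ν y c := by gcongr; exact hν μw hνμw hμw c
    _ ≤ sizeW ν + ν w c := hscore_w ▸ bScore_add_sum_col_le_sizeW_add ν w c

end

theorem stmt18_general {C : Type*} [Fintype C]
    (n m : ℕ) (hm : Fintype.card C = m)
    (μ : C → C → ℕ) (hG : IsCompleteW n μ)
    (w : C) (μX : C → C → ℕ) (hX : MSB n μ μX w) :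
    n * (m - 1) - minOpp μ w ≤ sizeW μX := by
  subst hm
  by_cases hrival : ∃ c, c ≠ w
  · obtain ⟨c₀, hc₀⟩ := hrival
    obtain ⟨c, hcw, hc⟩ := exists_ne_apply_eq_minOpp (μ := μ) hc₀
    have hbound := mul_card_sub_one_le_sizeW_add hG hX.1 hX.2.1 hcw
    have hXc := hX.1 w c
    omega
  · have hcard : Fintype.card C = 1 := Fintype.card_eq_one_iff.mpr ⟨w, by simpa using hrival⟩
    simp [hcard]

/-- Lower bound on minimal supports for Borda:
`|X| ≥ n(m-1) - min_{c≠w} μ(w,c)`. -/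
theorem stmt18 {C : Type*} [Fintype C] [DecidableEq C] [Nonempty C]
    (n m : ℕ) (hn : 0 < n) (hm : Fintype.card C = m)
    (μ : C → C → ℕ) (hG : IsCompleteW n μ)
    (w : C) (hw : InBorda μ w) (μX : C → C → ℕ) (hX : MSB n μ μX w) :
    n * (m - 1) - minOpp μ w ≤ sizeW μX :=
  stmt18_general n m hm μ hG w μX hX
end

section
/- Let G = (C, μ) be a complete n-weighted tournament and let w ∈ Borda(G) be a Borda winner of G. Then there exists a smallest minimal support X = (C, μ_X) for w ∈ Borda(G) such that either X consists only of pairwise comparisons won by w (i.e., μ_X(c, c') = 0 whenever c ≠ w), or X contains all pairwise comparisons won by w in G (i.e., μ_X(w, c) = μ(w, c) for every c ∈ C). -/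
/-!
For a support `X ⊆ G`, the worst completion for `w` against a rival `c` gives `w` and `c` only the
votes `X` already grants them; hence `w` is a necessary winner in `X` iff
`(|C| - 1) n ≤ σ_X(w) + in_X(c)` for every `c ≠ w`, where `in_X(c)` is the weight of the
comparisons `c` loses in `X`. Every support of minimum size is a smallest minimal support. Among
these take one maximizing `σ_X(w)`: if it used a comparison not won by `w` and missed one of `w`'s
wins in `G`, moving one vote from the former to the latter would keep it a support of the same
size and raise `σ_X(w)`.
-/

section

variable {C : Type*} {n : ℕ} {w : C} {μ ν ν' X : C → C → ℕ}

lemma IsCompleteW.le (hμ : IsCompleteW n μ) (x y : C) : μ x y ≤ n := by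
  by_cases hxy : x = y
  · simp [hxy, hμ.1]
  · have := hμ.2 x y hxy
    omega

lemma ExtW.diag_eq_zero (hν : ExtW ν μ) (hμ : IsCompleteW n μ) (x : C) : ν x x = 0 :=
  Nat.eq_zero_of_le_zero (hμ.1 x ▸ hν x x)

lemma IsCompleteW.eq_of_extW (hμ : IsCompleteW n μ) (hν : IsCompleteW n ν) (h : ExtW μ ν) :
    ν = μ := by
  funext x y
  by_cases hxy : x = y
  · rw [hxy, hμ.1, hν.1]
  · have := hμ.2 x y hxy
    have := hν.2 x y hxy
    have := h x y
    have := h y x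
    omega

section completion

variable (r : C → C → Prop) [DecidableRel r]

def completionBy (n : ℕ) (ν μ : C → C → ℕ) : C → C → ℕ :=
  fun x y => if r x y then ν x y else if r y x then n - ν y x else μ x y

variable {r}

lemma completionBy_of_rel {x y : C} (h : r x y) : completionBy r n ν μ x y = ν x y :=
  if_pos h

lemma extW_completionBy (hμ : IsCompleteW n μ) (hν : ExtW ν μ) : ExtW ν (completionBy r n ν μ) := by
  intro x y
  unfold completionBy
  split_ifs with hxy hyx
  · exact le_rfl
  · have hne : x ≠ y := by rintro rfl; exact hxy hyx
    have := hμ.2 x y hne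
    have := hν x y
    have := hν y x
    omega
  · exact hν x y

lemma isCompleteW_completionBy (hμ : IsCompleteW n μ) (hν : ExtW ν μ)
    (hr : ∀ x y, r x y → ¬ r y x) : IsCompleteW n (completionBy r n ν μ) := by
  refine ⟨fun x => ?_, fun x y hne => ?_⟩
  · have hxx : ¬ r x x := fun h => hr x x h h
    simp [completionBy, hxx, hμ.1 x]
  · have := hμ.2 x y hne
    have := (hν x y).trans (hμ.le x y)
    have := (hν y x).trans (hμ.le y x)
    by_cases hxy : r x y
    · simp only [completionBy, hxy, hr x y hxy, if_true, if_false]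
      omega
    by_cases hyx : r y x
    · simp only [completionBy, hxy, hyx, if_true, if_false]
      omega
    simpa only [completionBy, hxy, hyx, if_false]

end completion

section single

variable [DecidableEq C]

def singleW (a b : C) : C → C → ℕ :=
  fun x y => if x = a ∧ y = b then 1 else 0

lemma singleW_le {a b : C} (h : X a b ≠ 0) : singleW a b ≤ X := fun x y => by
  change (if x = a ∧ y = b then 1 else 0) ≤ X x y
  split_ifs with hab
  · obtain ⟨rfl, rfl⟩ := hab
    omega
  · exact Nat.zero_le _

end single

variable [Fintype C]

def inWeight (ν : C → C → ℕ) (c : C) : ℕ :=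
  ∑ x, ν x c

lemma bScore_mono (h : ExtW ν ν') (c : C) : bScore ν c ≤ bScore ν' c :=
  Finset.sum_le_sum fun y _ => h c y

lemma inWeight_mono (h : ExtW ν ν') (c : C) : inWeight ν c ≤ inWeight ν' c :=
  Finset.sum_le_sum fun x _ => h x c

lemma bScore_add (ν ν' : C → C → ℕ) (c : C) : bScore (ν + ν') c = bScore ν c + bScore ν' c :=
  Finset.sum_add_distrib

lemma inWeight_add (ν ν' : C → C → ℕ) (c : C) :
    inWeight (ν + ν') c = inWeight ν c + inWeight ν' c :=
  Finset.sum_add_distrib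

lemma sizeW_add (ν ν' : C → C → ℕ) : sizeW (ν + ν') = sizeW ν + sizeW ν' := by
  simp only [sizeW, Pi.add_apply, Finset.sum_add_distrib]

lemma sizeW_lt_of_extW_of_ne_s19 (h : ExtW ν ν') (hne : ν ≠ ν') : sizeW ν < sizeW ν' := by
  obtain ⟨a, b, hab⟩ : ∃ a b, ν a b < ν' a b := by
    by_contra! h'
    exact hne (funext₂ fun a b => (h a b).antisymm (h' a b))
  exact Finset.sum_lt_sum (fun x _ => Finset.sum_le_sum fun y _ => h x y)
    ⟨a, Finset.mem_univ a, Finset.sum_lt_sum (fun y _ => h a y) ⟨b, Finset.mem_univ b, hab⟩⟩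

section single

variable [DecidableEq C]

lemma sizeW_singleW (a b : C) : sizeW (singleW a b) = 1 := by
  simp [sizeW, singleW, ite_and]

lemma bScore_singleW (a b x : C) : bScore (singleW a b) x = if x = a then 1 else 0 := by
  simp [bScore, singleW, ite_and]

lemma inWeight_singleW_le (a b y : C) : inWeight (singleW a b) y ≤ 1 := by
  by_cases h : y = b <;> simp [inWeight, singleW, h]

end single

lemma IsCompleteW.bScore_add_inWeight (hμ : IsCompleteW n μ) (c : C) :
    bScore μ c + inWeight μ c = (Fintype.card C - 1) * n := by
  classical
  rw [bScore, inWeight, ← Finset.sum_add_distrib, ← Finset.add_sum_erase _ _ (Finset.mem_univ c),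
    hμ.1 c, Finset.sum_congr rfl fun y hy => hμ.2 c y (Finset.ne_of_mem_erase hy).symm,
    Finset.sum_const, Finset.card_erase_of_mem (Finset.mem_univ c), Finset.card_univ, smul_eq_mul,
    zero_add, zero_add]

lemma nwb_of_inBorda (hμ : IsCompleteW n μ) (hw : InBorda μ w) : NWB n μ w :=
  fun _ h hν => hμ.eq_of_extW hν h ▸ hw

theorem nwb_iff_forall_le (hμ : IsCompleteW n μ) (hν : ExtW ν μ) :
    NWB n ν w ↔ ∀ c, c ≠ w → (Fintype.card C - 1) * n ≤ bScore ν w + inWeight ν c := by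
  constructor
  · intro h c hcw
    classical
    -- the completion in which `w` and `c` both get only the votes `ν` already gives them
    let r : C → C → Prop := fun x y => x ≠ y ∧ (x = w ∨ y = c)
    have hr : ∀ x y, r x y → ¬ r y x := by
      rintro x y ⟨hxy, rfl | rfl⟩ ⟨-, h | h⟩ <;> simp_all [eq_comm]
    set ν' := completionBy r n ν μ
    have hν' : IsCompleteW n ν' := isCompleteW_completionBy hμ hν hr
    have hrow : bScore ν' w = bScore ν w := Finset.sum_congr rfl fun y _ => by
      rcases eq_or_ne w y with rfl | hwy
      · rw [hν'.1, hν.diag_eq_zero hμ]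
      · exact completionBy_of_rel ⟨hwy, .inl rfl⟩
    have hcol : inWeight ν' c = inWeight ν c := Finset.sum_congr rfl fun x _ => by
      rcases eq_or_ne x c with rfl | hxc
      · rw [hν'.1, hν.diag_eq_zero hμ]
      · exact completionBy_of_rel ⟨hxc, .inr rfl⟩
    have := h ν' (extW_completionBy hμ hν) hν' c
    have := hν'.bScore_add_inWeight c
    omega
  · intro h ν' hext hν' c
    rcases eq_or_ne c w with rfl | hcw
    · exact le_rfl
    have := hν'.bScore_add_inWeight c
    have := bScore_mono hext w
    have := inWeight_mono hext c
    have := h c hcw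
    omega

lemma smsb_of_forall_sizeW_le (hX : ExtW X μ) (hXw : NWB n X w)
    (h : ∀ Y, ExtW Y μ → NWB n Y w → sizeW X ≤ sizeW Y) : SMSB n μ X w := by
  refine ⟨⟨hX, hXw, fun Y hYX hne hYw => ?_⟩, fun Y hY => h Y hY.1 hY.2.1⟩
  have := h Y (fun x y => (hYX x y).trans (hX x y)) hYw
  have := sizeW_lt_of_extW_of_ne_s19 hYX hne
  omega

/-- Moving one vote of `X` from a comparison not won by `w` to one that `w` wins in `μ` keeps `w`
a necessary winner: `w`'s score rises by one while every rival's in-weight drops by at most one. -/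
lemma exists_nwb_sizeW_eq_bScore_succ [DecidableEq C] (hμ : IsCompleteW n μ) {c c' c₀ : C}
    (hX : ExtW X μ) (hXw : NWB n X w) (hcw : c ≠ w) (hpos : X c c' ≠ 0)
    (hlt : X w c₀ < μ w c₀) :
    ∃ Y, ExtW Y μ ∧ NWB n Y w ∧ sizeW Y = sizeW X ∧ bScore Y w = bScore X w + 1 := by
  set Y := X + singleW w c₀ - singleW c c'
  have hY : Y + singleW c c' = X + singleW w c₀ :=
    tsub_add_cancel_of_le ((singleW_le hpos).trans le_self_add)
  have hYμ : ExtW Y μ := fun x y => by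
    have h := congrFun₂ hY x y
    simp only [singleW, Pi.add_apply] at h
    by_cases hwc₀ : x = w ∧ y = c₀
    · obtain ⟨rfl, rfl⟩ := hwc₀
      split_ifs at h <;> omega
    · have := hX x y
      split_ifs at h <;> omega
  have hsize := congrArg sizeW hY
  have hscore := congrArg (bScore · w) hY
  have hin (d : C) := congrArg (inWeight · d) hY
  simp only [sizeW_add, sizeW_singleW, bScore_add, bScore_singleW, if_neg hcw.symm, ↓reduceIte,
    inWeight_add] at hsize hscore hin
  refine ⟨Y, hYμ, (nwb_iff_forall_le hμ hYμ).2 fun d hd => ?_, by omega, by omega⟩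
  have := (nwb_iff_forall_le hμ hX).1 hXw d hd
  have := hin d
  have := inWeight_singleW_le c c' d
  omega

lemma offRow_eq_zero_or_row_eq (hμ : IsCompleteW n μ) (hX : ExtW X μ)
    (hXw : NWB n X w)
    (hmax : ∀ Y, ExtW Y μ → NWB n Y w → sizeW Y = sizeW X → bScore Y w ≤ bScore X w) :
    (∀ c c', c ≠ w → X c c' = 0) ∨ ∀ c, X w c = μ w c := by
  classical
  by_contra! ⟨⟨c, c', hcw, hpos⟩, c₀, hne⟩
  obtain ⟨Y, hYμ, hYw, hsize, hscore⟩ :=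
    exists_nwb_sizeW_eq_bScore_succ hμ hX hXw hcw hpos ((hX w c₀).lt_of_ne hne)
  have := hmax Y hYμ hYw hsize
  omega

end

theorem stmt19_general {C : Type*} [Fintype C]
    (n : ℕ)
    (μ : C → C → ℕ) (hG : IsCompleteW n μ) (w : C) (hw : InBorda μ w) :
    ∃ μX : C → C → ℕ, SMSB n μ μX w ∧
      ((∀ c c' : C, c ≠ w → μX c c' = 0) ∨ (∀ c : C, μX w c = μ w c)) := by
  let F := {ν | ExtW ν μ ∧ NWB n ν w}
  let key (ν : C → C → ℕ) : ℕ ×ₗ ℕ := toLex (sizeW ν, bScore μ w - bScore ν w)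
  have hμF : μ ∈ F := ⟨fun _ _ => le_rfl, nwb_of_inBorda hG hw⟩
  obtain ⟨X, ⟨hXμ, hXw⟩, hmin⟩ : ∃ X ∈ F, ∀ Y ∈ F, key X ≤ key Y :=
    ⟨_, Function.argminOn_mem key F ⟨μ, hμF⟩, fun Y hY => Function.argminOn_le key F hY⟩
  refine ⟨X, smsb_of_forall_sizeW_le hXμ hXw fun Y hYμ hYw => ?_,
    offRow_eq_zero_or_row_eq hG hXμ hXw fun Y hYμ hYw hsize => ?_⟩
  · have := Prod.Lex.toLex_le_toLex.1 (hmin Y ⟨hYμ, hYw⟩)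
    omega
  · have := Prod.Lex.toLex_le_toLex.1 (hmin Y ⟨hYμ, hYw⟩)
    have := bScore_mono hYμ w
    omega

/-- There is a smallest minimal support for a Borda winner `w` that either
consists only of pairwise comparisons won by `w`, or contains all pairwise
comparisons won by `w` in `G`. -/
theorem stmt19 {C : Type*} [Fintype C] [DecidableEq C] [Nonempty C]
    (n : ℕ) (hn : 0 < n)
    (μ : C → C → ℕ) (hG : IsCompleteW n μ) (w : C) (hw : InBorda μ w) :
    ∃ μX : C → C → ℕ, SMSB n μ μX w ∧
      ((∀ c c' : C, c ≠ w → μX c c' = 0) ∨ (∀ c : C, μX w c = μ w c)) :=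
  stmt19_general n μ hG w hw
end
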